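/- arXiv:2012.09061 — 3 statements merged into one kernel-verified Lean document; each statement's English description precedes it below -/
import Mathlib

section
/- For every n ≥ 2 and every symmetric n×n matrix A over ZMod 2 with zero diagonal, there exist subsets S_1, …, S_{n-1} of Fin n (some possibly empty) such that A = Σ_{k=1}^{n-1} K(S_k), where K(S) is the n×n matrix over ZMod 2 with K(S)_{ij} = 1 if i ≠ j and both i ∈ S and j ∈ S, and K(S)_{ij} = 0 otherwise. (Matrix form of Proposition 1: every CZ circuit can be realized by at most n−1 global CZ gates.) -/
/-
Eliminate the vertices from the last one down. If row `v` is the last nonzero row of a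
symmetric zero-diagonal `A`, adding the clique on `v` and its neighbours clears row (and column)
`v` over `ZMod 2`, and leaves the rows after `v` zero, since those vertices are not neighbours
of `v`. After `n - 1` such steps only row `0` can be nonzero, and by symmetry and the zero
diagonal the matrix is then `0`.
-/

open Matrix

def Kmat {n : ℕ} (S : Finset (Fin n)) : Matrix (Fin n) (Fin n) (ZMod 2) :=
  Matrix.of fun i j => if i ≠ j ∧ i ∈ S ∧ j ∈ S then 1 else 0

section Kmat

variable {n : ℕ}

lemma Kmat_apply (S : Finset (Fin n)) (i j : Fin n) :
    Kmat S i j = if i ≠ j ∧ i ∈ S ∧ j ∈ S then 1 else 0 :=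
  rfl

@[simp]
lemma Kmat_empty : Kmat (∅ : Finset (Fin n)) = 0 := by
  ext i j
  simp [Kmat_apply]

@[simp]
lemma Kmat_apply_self (S : Finset (Fin n)) (i : Fin n) : Kmat S i i = 0 := by
  simp [Kmat_apply]

lemma isSymm_Kmat (S : Finset (Fin n)) : (Kmat S).IsSymm := by
  ext i j
  simp only [transpose_apply, Kmat_apply]
  exact if_congr (by tauto) rfl rfl

lemma Kmat_row_eq_zero_of_notMem {S : Finset (Fin n)} {i : Fin n} (hi : i ∉ S) :
    Kmat S i = 0 := by
  ext j
  simp [Kmat_apply, hi]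

end Kmat

def IsSumOfCliques {n : ℕ} (k : ℕ) (A : Matrix (Fin n) (Fin n) (ZMod 2)) : Prop :=
  ∃ S : Fin k → Finset (Fin n), A = ∑ i, Kmat (S i)

namespace IsSumOfCliques

variable {n k : ℕ} {A : Matrix (Fin n) (Fin n) (ZMod 2)}

lemma zero : IsSumOfCliques 0 (0 : Matrix (Fin n) (Fin n) (ZMod 2)) :=
  ⟨Fin.elim0, by simp⟩

lemma add_Kmat (h : IsSumOfCliques k A) (T : Finset (Fin n)) :
    IsSumOfCliques (k + 1) (A + Kmat T) := by
  obtain ⟨S, rfl⟩ := h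
  exact ⟨Fin.snoc S T, by simp [Fin.sum_univ_castSucc]⟩

lemma succ (h : IsSumOfCliques k A) : IsSumOfCliques (k + 1) A := by
  simpa using h.add_Kmat ∅

lemma of_add_Kmat {T : Finset (Fin n)} (h : IsSumOfCliques k (A + Kmat T)) :
    IsSumOfCliques (k + 1) A := by
  simpa [add_assoc, ZModModule.add_self] using h.add_Kmat T

end IsSumOfCliques

section Elimination

variable {n : ℕ} {A : Matrix (Fin n) (Fin n) (ZMod 2)}

def closedNbhd (A : Matrix (Fin n) (Fin n) (ZMod 2)) (v : Fin n) : Finset (Fin n) :=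
  insert v (Finset.univ.filter (A v · = 1))

lemma Kmat_closedNbhd_row {v : Fin n} (hv : A v v = 0) : Kmat (closedNbhd A v) v = A v := by
  ext j
  by_cases hjv : j = v
  · simp [hjv, hv]
  · have hdichotomy : ∀ x : ZMod 2, x ≠ 1 → x = 0 := by decide
    by_cases hj : A v j = 1
    · simp [Kmat_apply, closedNbhd, hjv, hj, Ne.symm hjv]
    · simp [Kmat_apply, closedNbhd, hjv, hdichotomy _ hj]

lemma row_add_Kmat_closedNbhd_self (hdiag : ∀ i, A i i = 0) (v : Fin n) :
    (A + Kmat (closedNbhd A v)) v = 0 := by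
  ext j
  rw [Matrix.add_apply, congrFun (Kmat_closedNbhd_row (hdiag v)) j, ZModModule.add_self,
    Pi.zero_apply]

lemma row_add_Kmat_closedNbhd_of_row_eq_zero (hsymm : A.IsSymm) (hdiag : ∀ i, A i i = 0)
    (v : Fin n) {i : Fin n} (hrow : A i = 0) : (A + Kmat (closedNbhd A v)) i = 0 := by
  by_cases hiv : i = v
  · subst hiv
    exact row_add_Kmat_closedNbhd_self hdiag i
  · have hvi : A v i = 0 := by rw [← hsymm.apply, congrFun hrow v, Pi.zero_apply]
    have hiT : i ∉ closedNbhd A v := by simp [closedNbhd, hiv, hvi]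
    ext j
    rw [Matrix.add_apply, congrFun hrow j, congrFun (Kmat_row_eq_zero_of_notMem hiT) j,
      Pi.zero_apply, add_zero]

lemma eq_zero_of_rows_eq_zero_of_pos (hsymm : A.IsSymm) (hdiag : ∀ i, A i i = 0)
    (hrows : ∀ i : Fin n, 0 < i.val → A i = 0) : A = 0 := by
  ext i j
  rcases Nat.eq_zero_or_pos i.val with hi | hi
  · rcases Nat.eq_zero_or_pos j.val with hj | hj
    · rw [Fin.ext (hi.trans hj.symm), hdiag, Matrix.zero_apply]
    · rw [← hsymm.apply, hrows j hj, Pi.zero_apply, Matrix.zero_apply]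
  · rw [hrows i hi, Pi.zero_apply, Matrix.zero_apply]

lemma isSumOfCliques_of_rows_eq_zero (m : ℕ) (A : Matrix (Fin n) (Fin n) (ZMod 2))
    (hsymm : A.IsSymm) (hdiag : ∀ i, A i i = 0) (hrows : ∀ i : Fin n, m < i.val → A i = 0) :
    IsSumOfCliques m A := by
  induction m generalizing A with
  | zero =>
    rw [eq_zero_of_rows_eq_zero_of_pos hsymm hdiag hrows]
    exact .zero
  | succ m ih =>
    by_cases hm : m + 1 < n
    · set v : Fin n := ⟨m + 1, hm⟩
      refine .of_add_Kmat (T := closedNbhd A v) <|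
        ih _ (hsymm.add (isSymm_Kmat _)) (by simp [hdiag]) fun i hi => ?_
      rcases (Nat.succ_le_of_lt hi).eq_or_lt with hiv | hi'
      · rw [show i = v from Fin.ext hiv.symm]
        exact row_add_Kmat_closedNbhd_self hdiag v
      · exact row_add_Kmat_closedNbhd_of_row_eq_zero hsymm hdiag v (hrows i hi')
    · exact (ih A hsymm hdiag fun i hi => by omega).succ

end Elimination

theorem cz_circuit_as_sum_of_cliques_general (n : ℕ)
    (A : Matrix (Fin n) (Fin n) (ZMod 2))
    (hsymm : Aᵀ = A) (hdiag : ∀ i, A i i = 0) :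
    ∃ S : Fin (n - 1) → Finset (Fin n), A = ∑ k, Kmat (S k) :=
  isSumOfCliques_of_rows_eq_zero (n - 1) A hsymm hdiag fun i hi => by omega

/-- Every symmetric matrix over `ZMod 2` with zero diagonal is a sum of at most
`n - 1` complete-graph adjacency matrices (matrix form of Proposition 1). -/
theorem cz_circuit_as_sum_of_cliques (n : ℕ) (hn : 2 ≤ n)
    (A : Matrix (Fin n) (Fin n) (ZMod 2))
    (hsymm : Aᵀ = A) (hdiag : ∀ i, A i i = 0) :
    ∃ S : Fin (n - 1) → Finset (Fin n), A = ∑ k, Kmat (S k) :=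
  cz_circuit_as_sum_of_cliques_general n A hsymm hdiag
end

section
/- For every n ≥ 2 and every set E of unordered pairs of distinct elements of Fin n (a simple graph), there exist subsets S_1, …, S_{n-1} of Fin n (some possibly empty) such that ∏_{{i,j} ∈ E} CZ_{ij} = ∏_{k=1}^{n-1} GCZ_{S_k}. (Proposition 1, operator form: an n-qubit circuit consisting of just CZ gates can be implemented using at most n−1 global CZ gates.) -/
open Matrix

noncomputable section

/-- `2^n × 2^n` matrices, indexed by computational basis states `x : Fin n → Bool`. -/
abbrev NQMatrix (n : ℕ) := Matrix (Fin n → Bool) (Fin n → Bool) ℂ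

/-- A bit counted as 0 or 1. -/
def bitv (b : Bool) : ℕ := if b then 1 else 0

/-- A bit as an index into a 2×2 matrix. -/
def bIdx (b : Bool) : Fin 2 := if b then 1 else 0

/-- The n-fold Kronecker product of 2×2 matrices. -/
def kron {n : ℕ} (f : Fin n → Matrix (Fin 2) (Fin 2) ℂ) : NQMatrix n :=
  Matrix.of fun x y => ∏ i, f i (bIdx (x i)) (bIdx (y i))

def PX : Matrix (Fin 2) (Fin 2) ℂ := !![0, 1; 1, 0]
def PY : Matrix (Fin 2) (Fin 2) ℂ := !![0, -Complex.I; Complex.I, 0]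
def PZ : Matrix (Fin 2) (Fin 2) ℂ := !![1, 0; 0, -1]

/-- The Hadamard matrix. -/
def HMat : Matrix (Fin 2) (Fin 2) ℂ := ((Real.sqrt 2)⁻¹ : ℝ) • !![1, 1; 1, -1]

/-- The 2×2 matrix `A` applied at position `i`, identity elsewhere. -/
def gate1 {n : ℕ} (A : Matrix (Fin 2) (Fin 2) ℂ) (i : Fin n) : NQMatrix n :=
  kron (fun j => if j = i then A else 1)

lemma diag_comm {m : Type*} [Fintype m] [DecidableEq m] (d e : m → ℂ) :
    Commute (Matrix.diagonal d) (Matrix.diagonal e) := by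
  unfold Commute SemiconjBy
  rw [Matrix.diagonal_mul_diagonal, Matrix.diagonal_mul_diagonal]
  exact congrArg Matrix.diagonal (funext fun i => mul_comm (d i) (e i))

/-- The two-qubit ZZ interaction gate `ZZ_{ij}(α)`. -/
def ZZgate {n : ℕ} (i j : Fin n) (α : ℝ) : NQMatrix n :=
  Matrix.diagonal fun x =>
    Complex.exp (-Complex.I * (α / 2) * (-1 : ℂ) ^ (bitv (x i) + bitv (x j)))

/-- The global ZZ gate on a subset `S`: the product of `ZZgate i j α` over all
unordered pairs `{i,j} ⊆ S` with `i ≠ j`. -/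
def GZZ {n : ℕ} (S : Finset (Fin n)) (α : ℝ) : NQMatrix n :=
  ((S ×ˢ S).filter fun p => p.1 < p.2).noncommProd (fun p => ZZgate p.1 p.2 α)
    (fun _ _ _ _ _ => diag_comm _ _)

/-- The two-qubit CZ gate. -/
def CZgate {n : ℕ} (i j : Fin n) : NQMatrix n :=
  Matrix.diagonal fun x => (-1 : ℂ) ^ (bitv (x i) * bitv (x j))

/-- The global CZ gate on a subset `S`: the product of `CZgate i j` over all
unordered pairs `{i,j} ⊆ S` with `i ≠ j`. -/
def GCZ {n : ℕ} (S : Finset (Fin n)) : NQMatrix n :=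
  ((S ×ˢ S).filter fun p => p.1 < p.2).noncommProd (fun p => CZgate p.1 p.2)
    (fun _ _ _ _ _ => diag_comm _ _)

/-- Flip the bits at positions in `S`. -/
def flipS {n : ℕ} (S : Finset (Fin n)) (x : Fin n → Bool) : Fin n → Bool :=
  fun i => if i ∈ S then !(x i) else x i

/-- The layer of NOT gates on the qubits in `S`, as a permutation matrix. -/
def XS {n : ℕ} (S : Finset (Fin n)) : NQMatrix n :=
  Matrix.of fun x y => if y = flipS S x then 1 else 0

/-- The CNOT gate with control `c` and target `t`, as a permutation matrix. -/
def CNOT {n : ℕ} (c t : Fin n) : NQMatrix n :=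
  Matrix.of fun x y => if y = Function.update x t (xor (x t) (x c)) then 1 else 0

/-- The targeted global Mølmer–Sørensen gate on the subset `S`:
`GMS_S(α) = exp(-i·(α/4)·Σ_{i ≠ j ∈ S} X_i·X_j)`, the sum ranging over ordered
pairs of distinct elements of `S`. -/
def GMS {n : ℕ} (S : Finset (Fin n)) (α : ℝ) : NQMatrix n :=
  NormedSpace.exp ((-Complex.I * (α / 4)) •
    ∑ p ∈ (S ×ˢ S).filter (fun p => p.1 ≠ p.2), gate1 PX p.1 * gate1 PX p.2)

/-! Over `ZMod 2`, the CZ circuit of `E` is the diagonal matrix of signs `(-1) ^ q(x)` with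
`q(x) = ∑_{i<j} A i j * x i * x j`, `A` the adjacency matrix of `E`, and `GCZ S` is the one with
`A = 1_S 1_Sᵀ`. So it suffices to write `A`, off the diagonal, as a sum of `n - 1` matrices
`s sᵀ`. Subtracting `v vᵀ`, where `v = e₀ + (row 0 of A off the diagonal)`, clears row and
column `0` off the diagonal, and one recurses on the remaining `n - 1` indices. -/

open Finset

namespace Matrix

variable {R : Type*} [CommRing R]

theorem IsSymm.exists_apply_eq_sum_mul_self_of_ne_fin_succ :
    ∀ {m : ℕ} {A : Matrix (Fin (m + 1)) (Fin (m + 1)) R}, A.IsSymm →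
      ∃ s : Fin m → Fin (m + 1) → R, ∀ i j, i ≠ j → A i j = ∑ k, s k i * s k j
  | 0, _, _ => ⟨0, fun i j hij => absurd (Fin.subsingleton_one.elim i j) hij⟩
  | m + 1, A, hA => by
    set v : Fin (m + 2) → R := Fin.cons 1 fun j => A 0 j.succ
    obtain ⟨t, ht⟩ := IsSymm.exists_apply_eq_sum_mul_self_of_ne_fin_succ
      (A := of fun i j : Fin (m + 1) => A i.succ j.succ - v i.succ * v j.succ)
      (IsSymm.ext fun i j => by simp [hA.apply, mul_comm])
    refine ⟨Fin.cons v fun k => Fin.cons 0 (t k), fun i j hij => ?_⟩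
    rw [Fin.sum_univ_succ]
    cases i using Fin.cases with
    | zero =>
      cases j using Fin.cases with
      | zero => exact absurd rfl hij
      | succ j => simp [v]
    | succ i =>
      cases j using Fin.cases with
      | zero => simp [v, hA.apply]
      | succ j => simp [← ht i j fun h => hij (congrArg _ h)]

theorem IsSymm.exists_apply_eq_sum_mul_self_of_ne {n : ℕ} {A : Matrix (Fin n) (Fin n) R}
    (hA : A.IsSymm) :
    ∃ s : Fin (n - 1) → Fin n → R, ∀ i j, i ≠ j → A i j = ∑ k, s k i * s k j := by
  cases n with
  | zero => exact ⟨0, fun i => i.elim0⟩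
  | succ m => exact hA.exists_apply_eq_sum_mul_self_of_ne_fin_succ

end Matrix

theorem neg_one_pow_eq_of_natCast_eq {R : Type*} [Ring R] {a b : ℕ}
    (h : (a : ZMod 2) = b) : (-1 : R) ^ a = (-1) ^ b := by
  rw [neg_one_pow_eq_pow_mod_two, neg_one_pow_eq_pow_mod_two (n := b),
    (ZMod.natCast_eq_natCast_iff' a b 2).1 h]

theorem ZMod.ite_eq_one_one_zero (a : ZMod 2) : (if a = 1 then 1 else 0 : ZMod 2) = a := by
  fin_cases a <;> rfl

theorem Finset.sum_eq_sum_mul_indicator_of_subset {ι R : Type*} [DecidableEq ι]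
    [CommSemiring R] {s t : Finset ι} (hts : t ⊆ s) {w f : ι → R}
    (hw : ∀ i ∈ s, w i = if i ∈ t then 1 else 0) :
    ∑ i ∈ t, f i = ∑ i ∈ s, w i * f i := by
  rw [← inter_eq_right.2 hts, ← sum_ite_mem]
  exact sum_congr rfl fun i hi => by rw [hw i hi, ite_mul, one_mul, zero_mul]

section Diagonal

variable {ι m α : Type*} [Fintype m] [DecidableEq m] [CommSemiring α]

theorem Finset.noncommProd_diagonal (s : Finset ι) (d : ι → m → α) (comm) :
    s.noncommProd (fun i => diagonal (d i)) comm = diagonal fun x => ∏ i ∈ s, d i x := by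
  have h := s.map_noncommProd d (fun _ _ _ _ _ => Commute.all _ _) (diagonalRingHom m α)
  rw [noncommProd_eq_prod, prod_fn] at h
  exact h.symm

theorem List.prod_ofFn_diagonal {k : ℕ} (d : Fin k → m → α) :
    (List.ofFn fun i => diagonal (d i)).prod = diagonal fun x => ∏ i, d i x := by
  have h := map_list_prod (diagonalRingHom m α) (List.ofFn d)
  rw [List.prod_ofFn, prod_fn, List.map_ofFn] at h
  exact h.symm

end Diagonal

section Circuit

variable {n : ℕ}

theorem noncommProd_CZgate (F : Finset (Fin n × Fin n)) (comm) :
    F.noncommProd (fun p => CZgate p.1 p.2) comm =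
      diagonal fun x => (-1 : ℂ) ^ ∑ p ∈ F, bitv (x p.1) * bitv (x p.2) :=
  (F.noncommProd_diagonal _ comm).trans <| by simp only [prod_pow_eq_pow_sum]

theorem GCZ_eq_diagonal (S : Finset (Fin n)) :
    GCZ S = diagonal fun x => (-1 : ℂ) ^
      ∑ p ∈ (S ×ˢ S).filter (fun p => p.1 < p.2), bitv (x p.1) * bitv (x p.2) :=
  noncommProd_CZgate _ _

def edgeMatrix (E : Finset (Fin n × Fin n)) : Matrix (Fin n) (Fin n) (ZMod 2) :=
  of fun i j => if (min i j, max i j) ∈ E then 1 else 0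

theorem isSymm_edgeMatrix (E : Finset (Fin n × Fin n)) : (edgeMatrix E).IsSymm :=
  IsSymm.ext fun i j => by simp only [edgeMatrix, of_apply, min_comm, max_comm]

theorem sum_edges_eq_sum_sum_cliques {m : ℕ} {E : Finset (Fin n × Fin n)}
    (hE : ∀ p ∈ E, p.1 < p.2) {s : Fin m → Fin n → ZMod 2}
    (hs : ∀ i j, i ≠ j → edgeMatrix E i j = ∑ k, s k i * s k j) (χ : Fin n → ZMod 2) :
    ∑ p ∈ E, χ p.1 * χ p.2 =
      ∑ k, ∑ p ∈ (univ.filter (s k · = 1) ×ˢ univ.filter (s k · = 1)).filter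
        (fun p => p.1 < p.2), χ p.1 * χ p.2 := by
  set P : Finset (Fin n × Fin n) := {p | p.1 < p.2}
  have hP : ∀ p, p ∈ P ↔ p.1 < p.2 := fun p => by simp [P]
  have hE' : ∑ p ∈ E, χ p.1 * χ p.2 = ∑ p ∈ P, edgeMatrix E p.1 p.2 * (χ p.1 * χ p.2) :=
    sum_eq_sum_mul_indicator_of_subset (fun p hp => (hP p).2 (hE p hp)) fun p hp => by
      rw [hP] at hp
      simp [edgeMatrix, min_eq_left hp.le, max_eq_right hp.le]
  have hcliques : ∀ k, ∑ p ∈ (univ.filter (s k · = 1) ×ˢ univ.filter (s k · = 1)).filter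
      (fun p => p.1 < p.2), χ p.1 * χ p.2 = ∑ p ∈ P, s k p.1 * s k p.2 * (χ p.1 * χ p.2) :=
    fun k => sum_eq_sum_mul_indicator_of_subset (fun p hp => (hP p).2 (mem_filter.1 hp).2)
      fun p hp => by
        rw [hP] at hp
        rw [← ZMod.ite_eq_one_one_zero (s k p.1), ← ZMod.ite_eq_one_one_zero (s k p.2)]
        simp only [ite_zero_mul_ite_zero, mul_one, mem_filter, mem_product, mem_univ, true_and,
          hp, and_true]
  rw [hE', sum_congr rfl fun p hp => by rw [hs p.1 p.2 ((hP p).1 hp).ne]]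
  simp_rw [hcliques, sum_mul]
  exact sum_comm

end Circuit

theorem cz_circuit_by_gcz_gates_general (n : ℕ)
    (E : Finset (Fin n × Fin n)) (hE : ∀ p ∈ E, p.1 < p.2) :
    ∃ S : Fin (n - 1) → Finset (Fin n),
      E.noncommProd (fun p => CZgate p.1 p.2) (fun _ _ _ _ _ => diag_comm _ _)
        = (List.ofFn fun k : Fin (n - 1) => GCZ (S k)).prod := by
  obtain ⟨s, hs⟩ := (isSymm_edgeMatrix E).exists_apply_eq_sum_mul_self_of_ne
  refine ⟨fun k => univ.filter (s k · = 1), (noncommProd_CZgate E _).trans ?_⟩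
  simp only [GCZ_eq_diagonal, List.prod_ofFn_diagonal, prod_pow_eq_pow_sum]
  congr 1
  funext x
  apply neg_one_pow_eq_of_natCast_eq
  push_cast
  exact sum_edges_eq_sum_sum_cliques hE hs fun i => (bitv (x i) : ZMod 2)

/-- Proposition 1 (operator form): any circuit of CZ gates, given by a set `E` of
unordered pairs of distinct qubits (each pair `{i,j}` represented as `(i,j)` with
`i < j`), equals a product of at most `n - 1` global CZ gates. -/
theorem cz_circuit_by_gcz_gates (n : ℕ) (hn : 2 ≤ n)
    (E : Finset (Fin n × Fin n)) (hE : ∀ p ∈ E, p.1 < p.2) :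
    ∃ S : Fin (n - 1) → Finset (Fin n),
      E.noncommProd (fun p => CZgate p.1 p.2) (fun _ _ _ _ _ => diag_comm _ _)
        = (List.ofFn fun k : Fin (n - 1) => GCZ (S k)).prod :=
  cz_circuit_by_gcz_gates_general n E hE
end
end

section
/- Let n ≥ 1, S ⊆ Fin n with t ∈ S, and α real. Let F = ∏_{i ∈ S∖{t}} CNOT_{i,t} (these permutation matrices pairwise commute, so the product is well defined, and F is an involution). Then F · D_t(α) · F = P_S(α), where D_t(α) is the diagonal matrix with (x,x)-entry exp(-i·(α/2)·(-1)^{x_t}) and P_S(α) is the diagonal matrix with (x,x)-entry exp(-i·(α/2)·(-1)^{Σ_{i∈S} x_i}). (Figure 1: a fan-in ladder of CNOTs conjugating a single-qubit Z-phase realizes the phase gadget on S.) -/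
/-!
`CNOT_{c,t}` is the permutation matrix of `x ↦ x` with bit `t` XOR-ed by `x c`. As long as the
controls differ from `t`, these maps compose by XOR-ing their increments, so the fan-in is the
permutation matrix of the involution `φ` that XORs the parity of the bits in `S \ {t}` into bit
`t`. Conjugating a diagonal matrix by the permutation matrix of an involution precomposes its
diagonal with `φ`, and the sign of bit `t` of `φ x` is `(-1) ^ ∑ i ∈ S, x i`.
-/

open Matrix

noncomputable section

/-- The single-qubit Z-phase gate `D_t(α)` on qubit `t`. -/
def Dgate {n : ℕ} (t : Fin n) (α : ℝ) : NQMatrix n :=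
  Matrix.diagonal fun x => Complex.exp (-Complex.I * (α / 2) * (-1 : ℂ) ^ (bitv (x t)))

/-- The phase gadget `P_S(α)` on the subset `S`. -/
def PhaseGadget {n : ℕ} (S : Finset (Fin n)) (α : ℝ) : NQMatrix n :=
  Matrix.diagonal fun x =>
    Complex.exp (-Complex.I * (α / 2) * (-1 : ℂ) ^ (∑ i ∈ S, bitv (x i)))

/-- The fan-in gate: the product of the (pairwise commuting) gates `CNOT_{i,t}`
over all `i ∈ S \ {t}`. -/
def fanIn {n : ℕ} (S : Finset (Fin n)) (t : Fin n) : NQMatrix n :=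
  (((S.erase t).sort (· ≤ ·)).map fun c => CNOT c t).prod

section XorAt

variable {ι : Type*} [DecidableEq ι]

def xorAt (t : ι) (g : (ι → Bool) → Bool) (x : ι → Bool) : ι → Bool :=
  Function.update x t (xor (x t) (g x))

theorem xorAt_xorAt {t : ι} {g : (ι → Bool) → Bool}
    (hg : ∀ x b, g (Function.update x t b) = g x) (h : (ι → Bool) → Bool) (x : ι → Bool) :
    xorAt t g (xorAt t h x) = xorAt t (fun y => xor (h y) (g y)) x := by
  simp [xorAt, hg]

theorem xorAt_involutive {t : ι} {g : (ι → Bool) → Bool}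
    (hg : ∀ x b, g (Function.update x t b) = g x) : Function.Involutive (xorAt t g) := by
  intro x
  rw [xorAt_xorAt hg]
  simp [xorAt]

def parity (L : List ι) (x : ι → Bool) : Bool := L.foldr (fun c b => xor (x c) b) false

theorem parity_update {t : ι} {L : List ι} (ht : t ∉ L) (x : ι → Bool) (b : Bool) :
    parity L (Function.update x t b) = parity L x := by
  induction L with
  | nil => rfl
  | cons c L ih =>
    simp only [List.mem_cons, not_or] at ht
    exact congrArg₂ xor (Function.update_of_ne (Ne.symm ht.1) b x) (ih ht.2)

end XorAt

theorem neg_one_pow_bitv_xor {R : Type*} [Monoid R] [HasDistribNeg R] (a b : Bool) :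
    (-1 : R) ^ bitv (xor a b) = (-1) ^ bitv a * (-1) ^ bitv b := by
  cases a <;> cases b <;> simp [bitv]

theorem neg_one_pow_bitv_parity {ι R : Type*} [Monoid R] [HasDistribNeg R] (L : List ι)
    (x : ι → Bool) :
    (-1 : R) ^ bitv (parity L x) = (L.map fun c => (-1 : R) ^ bitv (x c)).prod := by
  induction L with
  | nil => simp [parity, bitv]
  | cons c L ih =>
    rw [List.map_cons, List.prod_cons, ← ih, ← neg_one_pow_bitv_xor]
    rfl

theorem prod_map_sort {ι M : Type*} [LinearOrder ι] [CommMonoid M] (s : Finset ι)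
    (f : ι → M) : ((s.sort (· ≤ ·)).map f).prod = ∏ i ∈ s, f i := by
  rw [Finset.prod_eq_multiset_prod, ← Finset.sort_eq s (· ≤ ·), Multiset.map_coe,
    Multiset.prod_coe]

theorem one_submatrix_id_mul {m α : Type*} [Fintype m] [DecidableEq m] [NonAssocSemiring α]
    (f : m → m) (M : Matrix m m α) :
    (1 : Matrix m m α).submatrix f id * M = M.submatrix f id := by
  simpa using one_submatrix_mul f (Equiv.refl m) M

theorem one_submatrix_mul_diagonal_mul_one_submatrix {m α : Type*} [Fintype m] [DecidableEq m]
    [Semiring α] {f : m → m} (hf : Function.Involutive f) (d : m → α) :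
    (1 : Matrix m m α).submatrix f id * diagonal d * (1 : Matrix m m α).submatrix f id =
      diagonal (d ∘ f) := by
  let σ := hf.toPerm f
  calc (1 : Matrix m m α).submatrix f id * diagonal d * (1 : Matrix m m α).submatrix σ id
      = (diagonal d).submatrix σ σ.symm := by
        rw [one_submatrix_id_mul, mul_submatrix_one σ id, submatrix_submatrix]; rfl
    _ = diagonal (d ∘ f) := by
        rw [Function.Involutive.toPerm_symm, submatrix_diagonal_equiv]; rfl

section CNOT

variable {n : ℕ}

theorem CNOT_eq_one_submatrix (c t : Fin n) :
    CNOT c t = (1 : NQMatrix n).submatrix (xorAt t (· c)) id := by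
  ext x y
  simp [CNOT, xorAt, one_apply, eq_comm]

theorem list_prod_map_CNOT {t : Fin n} {L : List (Fin n)} (ht : t ∉ L) :
    (L.map (CNOT · t)).prod = (1 : NQMatrix n).submatrix (xorAt t (parity L)) id := by
  induction L with
  | nil => ext x y; simp [xorAt, parity, one_apply]
  | cons c L ih =>
    simp only [List.mem_cons, not_or] at ht
    rw [List.map_cons, List.prod_cons, ih ht.2, CNOT_eq_one_submatrix,
      one_submatrix_id_mul, submatrix_submatrix]
    congr 1
    funext x
    exact xorAt_xorAt (parity_update ht.2) _ x

theorem fanIn_eq (S : Finset (Fin n)) (t : Fin n) :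
    fanIn S t = (1 : NQMatrix n).submatrix (xorAt t (parity ((S.erase t).sort (· ≤ ·)))) id :=
  list_prod_map_CNOT (by simp)

end CNOT

theorem fan_in_conj_realizes_phase_gadget_general (n : ℕ) (S : Finset (Fin n))
    (t : Fin n) (ht : t ∈ S) (α : ℝ) :
    fanIn S t * Dgate t α * fanIn S t = PhaseGadget S α := by
  set L := (S.erase t).sort (· ≤ ·)
  have htL : t ∉ L := by simp [L]
  rw [fanIn_eq, Dgate, one_submatrix_mul_diagonal_mul_one_submatrix
    (xorAt_involutive (parity_update htL)), PhaseGadget]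
  congr 1
  ext x
  have hsign : (-1 : ℂ) ^ bitv (xorAt t (parity L) x t) = (-1) ^ ∑ i ∈ S, bitv (x i) := by
    rw [xorAt, Function.update_self, neg_one_pow_bitv_xor, neg_one_pow_bitv_parity,
      ← Finset.prod_pow_eq_pow_sum, ← Finset.mul_prod_erase S _ ht, prod_map_sort]
  simp only [Function.comp_apply, hsign]

/-- Figure 1: a fan-in ladder of CNOTs conjugating a single-qubit Z-phase on the
target `t ∈ S` realizes the phase gadget on `S`. -/
theorem fan_in_conj_realizes_phase_gadget (n : ℕ) (hn : 1 ≤ n) (S : Finset (Fin n))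
    (t : Fin n) (ht : t ∈ S) (α : ℝ) :
    fanIn S t * Dgate t α * fanIn S t = PhaseGadget S α :=
  fan_in_conj_realizes_phase_gadget_general n S t ht α
end
end
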